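/- arXiv:1803.05248 — 3 statements merged into one kernel-verified Lean document; each statement's English description precedes it below -/
import Mathlib

section
/- Let V_d denote the set of vectors v = (v_d, …, v_0) of real polynomials with v_j = (1/j!)x^j + u_j and deg u_j ≤ j−1 (so v_0 = 1). Then a vector of polynomials v = (v_d, …, v_0) with v_0 = 1 belongs to V_d if and only if there exists a generalized complete Taylor operator T̃_d (an upper triangular (d+1)×(d+1) operator matrix with Δ on the diagonal, −1 on the superdiagonal, and real constants above the superdiagonal) such that T̃_d v = 0. -/
open Polynomial

/-- The falling factorial polynomial `(x)_j = x(x-1)⋯(x-j+1)`. -/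
noncomputable def fall (j : ℕ) : Polynomial ℝ :=
  ∏ k ∈ Finset.range j, (X - C (k : ℝ))

/-- The normalized falling factorial `[x]_j = (x)_j / j!`. -/
noncomputable def nfall (j : ℕ) : Polynomial ℝ :=
  ((j.factorial : ℝ))⁻¹ • fall j

/-- The forward difference operator `Δp(x) = p(x+1) - p(x)`. -/
noncomputable def fdiff (p : Polynomial ℝ) : Polynomial ℝ :=
  p.comp (X + 1) - p

/-- Action of a generalized complete Taylor operator with constant coefficients `s`
on a vector of polynomials `v`, indexed by degree: the component of degree `j` is
`Δ(v j) + ∑_{k<j} s j k • v k`.  (In the matrix picture, the constants `s j k`, `k < j`,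
are the strictly upper triangular entries of the operator written for the reversed
vector `[v_d, …, v_0]`; `s j (j-1) = -1` corresponds to the `-1` superdiagonal.) -/
noncomputable def tApply (s : ℕ → ℕ → ℝ) (v : ℕ → Polynomial ℝ) (j : ℕ) : Polynomial ℝ :=
  fdiff (v j) + ∑ k ∈ Finset.range j, C (s j k) * v k

/-- `s` encodes a generalized complete Taylor operator of order `d`:
only the entries `s j k` with `k < j ≤ d` may be nonzero, and the entries
corresponding to the superdiagonal (in the reversed ordering) equal `-1`. -/
def IsTaylorOp (d : ℕ) (s : ℕ → ℕ → ℝ) : Prop :=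
  (∀ j k, j ≤ k ∨ d < j → s j k = 0) ∧ ∀ j < d, s (j + 1) j = -1

/-- Membership in `V_d`: `v = (v_d, …, v_0)` with `v_j = [·]_j + u_j`, `deg u_j ≤ j - 1`
(so in particular `v_0 = 1`). -/
def MemV (d : ℕ) (v : ℕ → Polynomial ℝ) : Prop :=
  ∀ j ≤ d, (v j - nfall j).degree < (j : WithBot ℕ)

/-- `s` annihilates the polynomial vector `v` up to order `d`: `T̃ v = 0`. -/
def Annihilates (d : ℕ) (s : ℕ → ℕ → ℝ) (v : ℕ → Polynomial ℝ) : Prop :=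
  ∀ j ≤ d, tApply s v j = 0

/-- `V = (v_0, …, v_d)` (with `V j k` the degree-`k` component of `v_j`) is a chain of
length `d+1`: each `v_j ∈ V_j` and the compatibility condition holds, i.e. applying the
annihilator `T̃(v_j)` of `v_j` to the shifted vector `(v_{j+1,j+1}, …, v_{j+1,1})`
yields a vector of constant polynomials. -/
def IsPolyChain (d : ℕ) (V : ℕ → ℕ → Polynomial ℝ) : Prop :=
  (∀ j ≤ d, MemV j (V j)) ∧
    ∀ j < d, ∀ s : ℕ → ℕ → ℝ, IsTaylorOp j s → Annihilates j s (V j) →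
      ∀ i ≤ j, ∃ c : ℝ, tApply s (fun k => V (j + 1) (k + 1)) i = C c

/-!
Write `P_n` for the polynomials of degree `< n`. Row `j + 1` of `T̃ v = 0` says that
`Δ v_{j+1} - v_j` is a combination of `v_0, …, v_{j-1}`. When `v_0, …, v_j` already have the
prescribed leading terms they form a triangular basis of `P_j`, so the row says
`Δ v_{j+1} - v_j ∈ P_j`. Since `Δ [·]_{j+1} = [·]_j` and `Δ p ∈ P_j ↔ p ∈ P_{j+1}`, this is
equivalent to `v_{j+1} - [·]_{j+1} ∈ P_{j+1}`, and induction on `j` proves both directions.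
-/

open Submodule

lemma fwdDiff_iter_zero {M G : Type*} [AddCommMonoid M] [AddCommGroup G] (h : M) (n : ℕ) :
    (fwdDiff h)^[n] (0 : M → G) = 0 :=
  Function.iterate_fixed (fwdDiff_const h 0) n

lemma fwdDiff_iter_eval_eq_zero_of_mem_degreeLT {R : Type*} [CommRing R] {q : R[X]} {n : ℕ}
    (hq : q ∈ R[X]_n) : (fwdDiff 1)^[n] q.eval = 0 := by
  rcases eq_or_ne q 0 with rfl | hq0
  · simp only [eval_zero]
    exact fwdDiff_iter_zero (1 : R) n
  · exact fwdDiff_iter_eq_zero_of_degree_lt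
      ((natDegree_lt_iff_degree_lt hq0).2 (mem_degreeLT.1 hq))

lemma fdiff_eq_taylor_sub (p : ℝ[X]) : fdiff p = taylor 1 p - p := by
  rw [fdiff, taylor_apply, map_one]

lemma eval_fdiff (p : ℝ[X]) : (fdiff p).eval = fwdDiff 1 p.eval := by
  ext x
  simp [fdiff, fwdDiff, add_comm]

lemma fdiff_sub (p q : ℝ[X]) : fdiff (p - q) = fdiff p - fdiff q := by
  simp only [fdiff_eq_taylor_sub, map_sub]
  abel

lemma fdiff_smul (a : ℝ) (p : ℝ[X]) : fdiff (a • p) = a • fdiff p := by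
  simp only [fdiff_eq_taylor_sub, map_smul, smul_sub]

lemma fdiff_C (a : ℝ) : fdiff (C a) = 0 := by
  simp [fdiff]

lemma fdiff_mem_degreeLT_iff {p : ℝ[X]} {n : ℕ} :
    fdiff p ∈ ℝ[X]_n ↔ p ∈ ℝ[X]_(n + 1) := by
  constructor
  · intro h
    by_contra hp
    have hp0 : p ≠ 0 := fun h0 => hp (h0 ▸ zero_mem _)
    obtain ⟨m, hm⟩ : ∃ m, p.natDegree = m + (n + 1) := by
      rw [mem_degreeLT, ← natDegree_lt_iff_degree_lt hp0, not_lt] at hp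
      exact ⟨p.natDegree - (n + 1), by omega⟩
    -- The `natDegree p`-th difference of `p` is `p.leadingCoeff * (natDegree p)! ≠ 0`,
    -- yet it factors through the `(n + 1)`-th difference, which vanishes.
    have hfactorial := p.fwdDiff_iter_degree_eq_factorial
    rw [hm, Function.iterate_add_apply, Function.iterate_succ_apply, ← eval_fdiff,
      fwdDiff_iter_eval_eq_zero_of_mem_degreeLT h, fwdDiff_iter_zero, ← hm] at hfactorial
    simpa [hp0, Nat.factorial_ne_zero] using congrFun hfactorial 0
  · intro h
    rcases eq_or_ne p 0 with rfl | hp0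
    · simp [fdiff]
    rw [mem_degreeLT] at h ⊢
    have hlt := degree_sub_lt_left (degree_taylor p 1) (by rwa [Ne, taylor_eq_zero])
      (leadingCoeff_taylor 1 p)
    rw [degree_taylor, ← fdiff_eq_taylor_sub] at hlt
    exact hlt.trans_le (Order.le_of_lt_succ h)

lemma fall_eq_descPochhammer (j : ℕ) : fall j = descPochhammer ℝ j := by
  induction j with
  | zero => simp [fall]
  | succ j ih =>
    rw [fall, Finset.prod_range_succ, ← fall, ih, descPochhammer_succ_right, map_natCast]

lemma fdiff_descPochhammer_succ (j : ℕ) :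
    fdiff (descPochhammer ℝ (j + 1)) = ((j : ℝ) + 1) • descPochhammer ℝ j := by
  rw [fdiff]
  nth_rw 1 [descPochhammer_succ_left]
  rw [descPochhammer_succ_right, mul_comp, comp_assoc, smul_eq_C_mul]
  simp only [X_comp, sub_comp, one_comp, add_sub_cancel_right, comp_X, map_add, map_natCast,
    map_one]
  ring

lemma fdiff_nfall_succ (j : ℕ) : fdiff (nfall (j + 1)) = nfall j := by
  rw [nfall, fdiff_smul, fall_eq_descPochhammer, fdiff_descPochhammer_succ, smul_smul, nfall,
    fall_eq_descPochhammer, Nat.factorial_succ]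
  congr 1
  push_cast
  field_simp

lemma degree_nfall (j : ℕ) : (nfall j).degree = j := by
  rw [nfall, smul_eq_C_mul, degree_C_mul (by positivity), fall_eq_descPochhammer,
    degree_eq_natDegree (monic_descPochhammer ℝ j).ne_zero, descPochhammer_natDegree]

lemma nfall_zero : nfall 0 = 1 := by
  simp [nfall, fall]

lemma span_image_range_eq_degreeLT {K : Type*} [Field K] {v : ℕ → K[X]} {n : ℕ}
    (hv : ∀ k < n, (v k).degree = k) : span K (v '' ↑(Finset.range n)) = K[X]_n := by
  classical
  let S : Sequence K := ⟨fun k => if k < n then v k else X ^ k, fun k => by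
    split_ifs with hk
    exacts [hv k hk, degree_X_pow k]⟩
  have hS : v '' ↑(Finset.range n) = S '' Set.Iio n := by
    rw [Finset.coe_range]
    exact Set.image_congr fun k hk => (if_pos hk).symm
  rw [hS, S.span_degreeLT fun i _ => (leadingCoeff_ne_zero.2 (S.ne_zero i)).isUnit]

section MemV

variable {d : ℕ} {v : ℕ → ℝ[X]}

lemma MemV.mono {e : ℕ} (h : MemV d v) (hed : e ≤ d) : MemV e v :=
  fun j hj => h j (hj.trans hed)

lemma MemV.degree_eq (h : MemV d v) {k : ℕ} (hk : k ≤ d) : (v k).degree = k := by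
  have hlt : (v k - nfall k).degree < (nfall k).degree := degree_nfall k ▸ h k hk
  rw [← sub_add_cancel (v k) (nfall k), degree_add_eq_right_of_degree_lt hlt, degree_nfall]

lemma memV_zero_iff : MemV 0 v ↔ v 0 = 1 := by
  simp [MemV, nfall_zero, sub_eq_zero]

lemma memV_succ_iff :
    MemV (d + 1) v ↔ MemV d v ∧ v (d + 1) - nfall (d + 1) ∈ ℝ[X]_(d + 1) := by
  simp only [MemV, ← Nat.lt_succ_iff, mem_degreeLT]
  exact Nat.forall_lt_succ_right

lemma MemV.succ_iff_fdiff_sub_mem_span (h : MemV d v) :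
    MemV (d + 1) v ↔ fdiff (v (d + 1)) - v d ∈ span ℝ (v '' ↑(Finset.range d)) := by
  rw [memV_succ_iff, and_iff_right h, span_image_range_eq_degreeLT fun k hk => h.degree_eq hk.le,
    ← fdiff_mem_degreeLT_iff, fdiff_sub, fdiff_nfall_succ, ← sub_add_sub_cancel _ (v d),
    Submodule.add_mem_iff_left _ (mem_degreeLT.2 (h d le_rfl))]

lemma memV_iff_forall_fdiff_sub_mem_span (hv0 : v 0 = 1) :
    MemV d v ↔ ∀ i < d, fdiff (v (i + 1)) - v i ∈ span ℝ (v '' ↑(Finset.range i)) := by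
  induction d with
  | zero => simpa [memV_zero_iff] using hv0
  | succ d ih =>
    rw [Nat.forall_lt_succ_right, ← ih]
    exact ⟨fun h => ⟨h.mono d.le_succ, (h.mono d.le_succ).succ_iff_fdiff_sub_mem_span.1 h⟩,
      fun ⟨h, hd⟩ => h.succ_iff_fdiff_sub_mem_span.2 hd⟩

end MemV

section TaylorOp

variable {d : ℕ} {s : ℕ → ℕ → ℝ} {v : ℕ → ℝ[X]}

lemma tApply_zero : tApply s v 0 = fdiff (v 0) := by
  simp [tApply]

lemma tApply_succ {i : ℕ} (hs : s (i + 1) i = -1) :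
    tApply s v (i + 1) =
      fdiff (v (i + 1)) - v i + ∑ k ∈ Finset.range i, C (s (i + 1) k) * v k := by
  rw [tApply, Finset.sum_range_succ, hs, map_neg, C_1]
  ring

lemma exists_isTaylorOp_annihilates_iff (hv0 : fdiff (v 0) = 0) :
    (∃ s, IsTaylorOp d s ∧ Annihilates d s v) ↔
      ∀ i < d, fdiff (v (i + 1)) - v i ∈ span ℝ (v '' ↑(Finset.range i)) := by
  simp only [mem_span_image_finset_iff_exists_fun', smul_eq_C_mul]
  constructor
  · rintro ⟨s, ⟨-, hs⟩, hsv⟩ i hi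
    refine ⟨fun k => -s (i + 1) k, ?_⟩
    have hrow := hsv (i + 1) hi
    rw [tApply_succ (hs i hi)] at hrow
    simp only [map_neg, neg_mul, Finset.sum_neg_distrib]
    linear_combination -hrow
  · intro h
    choose! c hc using h
    refine ⟨fun j k => if k < j ∧ j ≤ d then (if k + 1 = j then -1 else -c (j - 1) k) else 0,
      ⟨fun j k hjk => if_neg (by omega), fun j hj => by simp [hj]⟩, ?_⟩
    rintro (_ | i) hi
    · rw [tApply_zero, hv0]
    · rw [tApply_succ (by simp [hi]), ← hc i hi, ← Finset.sum_add_distrib]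
      refine Finset.sum_eq_zero fun k hk => ?_
      have hki : k < i := Finset.mem_range.1 hk
      rw [if_pos ⟨by omega, hi⟩, if_neg (by omega), Nat.add_sub_cancel, map_neg, neg_mul,
        add_neg_cancel]

end TaylorOp

/-- A vector of polynomials `v` with `v 0 = 1` belongs to `V_d` if and only if there is a
generalized complete Taylor operator of order `d` annihilating it. -/
theorem memV_iff_exists_taylor (d : ℕ) (v : ℕ → Polynomial ℝ) (hv0 : v 0 = 1) :
    MemV d v ↔ ∃ s : ℕ → ℕ → ℝ, IsTaylorOp d s ∧ Annihilates d s v := by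
  rw [memV_iff_forall_fdiff_sub_mem_span hv0,
    exists_isTaylorOp_annihilates_iff (by rw [hv0, ← C_1, fdiff_C])]
end

section
/- Let T̃*_d(z) be the (d+1)×(d+1) symbol matrix of a generalized complete Taylor operator: upper triangular with (z^{−1} − 1) on the diagonal, constants in the strict upper triangle, and superdiagonal entries −1. Then its inverse factorizes as (T̃*_d(z))^{−1} = (z^{−1} − 1)^{−1}·D*(z)·P*(z)·D*(z)^{−1}, where D*(z) = diag(1, z^{−1}−1, …, (z^{−1}−1)^d) and P*(z) is an upper triangular matrix of Laurent polynomials with p*_{jj}(z) = 1 and P*(1) equal to the upper triangular matrix of all ones. -/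
/-!
Conjugation by `D = diagonal ((z⁻¹ - 1) ^ j)` turns `T̃*_d` into `(z⁻¹ - 1) • M`, where `M` is
unitriangular with `M j k = s j k (z⁻¹ - 1) ^ (k - j - 1)` above the diagonal; so `P* = M⁻¹` is
unitriangular too. Modulo `z⁻¹ - 1` only the superdiagonal entries `-1` of `M` survive, so `M`
reduces to `1 - E` with `E` the superdiagonal of ones, whose inverse is the upper triangular matrix
of ones. Hence `P*(1)` is that matrix.
-/

open LaurentPolynomial

/-- The Laurent polynomial `z⁻¹ - 1`, the symbol of the forward difference `Δ`. -/
noncomputable def tsym : LaurentPolynomial ℝ := T (-1) - 1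

namespace Matrix

section Unitriangular

variable {ι R : Type*} [Fintype ι] [DecidableEq ι] [LinearOrder ι] [CommRing R]
  {A B M : Matrix ι ι R}

omit [DecidableEq ι] in
theorem IsUpperTriangular.mul_apply_self (hA : A.IsUpperTriangular) (hB : B.IsUpperTriangular)
    (i : ι) : (A * B) i i = A i i * B i i := by
  rw [mul_apply, Finset.sum_eq_single i]
  · intro m _ hmi
    rcases hmi.lt_or_gt with hlt | hgt
    · rw [hA hlt, zero_mul]
    · rw [hB hgt, mul_zero]
  · simp

theorem IsUpperTriangular.nonsing_inv (hM : M.IsUpperTriangular) : M⁻¹.IsUpperTriangular := by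
  by_cases h : IsUnit M.det
  · have := M.invertibleOfIsUnitDet h
    exact blockTriangular_inv_of_blockTriangular hM
  · rw [nonsing_inv_apply_not_isUnit M h]
    exact blockTriangular_zero

theorem IsUpperTriangular.isUnit_det (hM : M.IsUpperTriangular) (hdiag : ∀ i, M i i = 1) :
    IsUnit M.det := by
  simp [det_of_isUpperTriangular hM, hdiag]

theorem IsUpperTriangular.nonsing_inv_apply_self (hM : M.IsUpperTriangular)
    (hdiag : ∀ i, M i i = 1) (i : ι) : M⁻¹ i i = 1 := by
  have h := congr_fun₂ (nonsing_inv_mul M (hM.isUnit_det hdiag)) i i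
  rwa [hM.nonsing_inv.mul_apply_self hM, hdiag, mul_one, one_apply_eq] at h

end Unitriangular

section Bidiagonal

variable {R : Type*} [CommRing R] {n : ℕ}

def superdiagonalOnes (n : ℕ) : Matrix (Fin n) (Fin n) R :=
  of fun j k => if (k : ℕ) = j + 1 then 1 else 0

def upperOnes (n : ℕ) : Matrix (Fin n) (Fin n) R :=
  of fun j k => if j ≤ k then 1 else 0

@[simp]
theorem superdiagonalOnes_apply (j k : Fin n) :
    (superdiagonalOnes n : Matrix (Fin n) (Fin n) R) j k = if (k : ℕ) = j + 1 then 1 else 0 :=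
  rfl

@[simp]
theorem upperOnes_apply (j k : Fin n) :
    (upperOnes n : Matrix (Fin n) (Fin n) R) j k = if j ≤ k then 1 else 0 :=
  rfl

theorem superdiagonalOnes_mul_upperOnes (j k : Fin n) :
    (superdiagonalOnes n * upperOnes n : Matrix (Fin n) (Fin n) R) j k =
      if j < k then 1 else 0 := by
  rw [mul_apply]
  by_cases hj : (j : ℕ) + 1 < n
  · rw [Finset.sum_eq_single (⟨j + 1, hj⟩ : Fin n)]
    · simp only [superdiagonalOnes_apply, upperOnes_apply]
      rw [if_true, one_mul]
      exact if_congr (by rw [Fin.le_def, Fin.lt_def]; exact Nat.succ_le_iff) rfl rfl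
    · intro m _ hm
      have : (m : ℕ) ≠ j + 1 := fun h => hm (Fin.ext h)
      simp [this]
    · simp
  · have hjk : ¬ j < k := by rw [Fin.lt_def]; omega
    rw [if_neg hjk]
    refine Finset.sum_eq_zero fun m _ => ?_
    have : (m : ℕ) ≠ j + 1 := by omega
    simp [this]

theorem one_sub_superdiagonalOnes_mul_upperOnes :
    (1 - superdiagonalOnes n) * upperOnes n = (1 : Matrix (Fin n) (Fin n) R) := by
  ext j k
  rw [sub_mul, one_mul, sub_apply, superdiagonalOnes_mul_upperOnes]
  simp only [upperOnes_apply, one_apply]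
  rcases lt_trichotomy j k with h | rfl | h
  · simp [h.le, h, h.ne]
  · simp
  · simp [not_le.mpr h, not_lt.mpr h.le, h.ne']

end Bidiagonal

section TaylorSymbol

variable {R : Type*} [CommRing R] {n : ℕ}

def taylorSymbol (t : R) (c : Fin n → Fin n → R) : Matrix (Fin n) (Fin n) R :=
  of fun j k => if j = k then t else if j < k then c j k else 0

def normalizedTaylorSymbol (t : R) (c : Fin n → Fin n → R) : Matrix (Fin n) (Fin n) R :=
  of fun j k => if j = k then 1 else if j < k then c j k * t ^ ((k : ℕ) - j - 1) else 0

variable (t : R) (c : Fin n → Fin n → R)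

theorem normalizedTaylorSymbol_isUpperTriangular :
    (normalizedTaylorSymbol t c).IsUpperTriangular := fun j k (hkj : k < j) => by
  simp [normalizedTaylorSymbol, hkj.ne', not_lt.mpr hkj.le]

theorem normalizedTaylorSymbol_apply_self (j : Fin n) : normalizedTaylorSymbol t c j j = 1 := by
  simp [normalizedTaylorSymbol]

theorem taylorSymbol_mul_diagonal :
    taylorSymbol t c * diagonal (fun j : Fin n => t ^ (j : ℕ)) =
      t • (diagonal (fun j : Fin n => t ^ (j : ℕ)) * normalizedTaylorSymbol t c) := by
  ext j k
  rw [mul_diagonal, smul_apply, diagonal_mul, smul_eq_mul]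
  simp only [taylorSymbol, normalizedTaylorSymbol, of_apply]
  rcases lt_trichotomy j k with h | rfl | h
  · have hk : t ^ (k : ℕ) = t ^ (j : ℕ) * t * t ^ ((k : ℕ) - j - 1) := by
      rw [← pow_succ, ← pow_add]
      congr 1
      rw [Fin.lt_def] at h
      omega
    rw [if_neg h.ne, if_pos h, if_neg h.ne, if_pos h, hk]
    ring
  · simp only [if_true, mul_one]
  · simp [h.ne', not_lt.mpr h.le]

variable {t c}

theorem map_normalizedTaylorSymbol (hc : ∀ j k : Fin n, (k : ℕ) = j + 1 → c j k = -1) :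
    (normalizedTaylorSymbol t c).map (Ideal.Quotient.mk (Ideal.span {t})) =
      1 - superdiagonalOnes n := by
  have ht : Ideal.Quotient.mk (Ideal.span {t}) t = 0 :=
    Ideal.Quotient.eq_zero_iff_mem.mpr (Ideal.mem_span_singleton_self t)
  ext j k
  simp only [normalizedTaylorSymbol, map_apply, of_apply, sub_apply, one_apply,
    superdiagonalOnes_apply]
  rcases lt_trichotomy j k with h | rfl | h
  · rw [if_neg h.ne, if_pos h, if_neg h.ne, zero_sub, map_mul, map_pow, ht]
    by_cases hk : (k : ℕ) = j + 1
    · simp [hk, hc j k hk]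
    · have : (k : ℕ) - j - 1 ≠ 0 := by rw [Fin.lt_def] at h; omega
      simp [hk, this]
  · simp
  · have hk : (k : ℕ) ≠ j + 1 := by rw [Fin.lt_def] at h; omega
    simp [h.ne', not_lt.mpr h.le, hk]

theorem exists_nonsing_inv_normalizedTaylorSymbol_eq_one_add_mul
    (hc : ∀ j k : Fin n, (k : ℕ) = j + 1 → c j k = -1) {j k : Fin n} (hjk : j ≤ k) :
    ∃ q, (normalizedTaylorSymbol t c)⁻¹ j k = 1 + t * q := by
  set M := normalizedTaylorSymbol t c
  set π := (Ideal.Quotient.mk (Ideal.span {t})).mapMatrix (m := Fin n)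
  have hM := normalizedTaylorSymbol_isUpperTriangular t c
  have hinv : π M⁻¹ * (1 - superdiagonalOnes n) = 1 := by
    rw [← map_normalizedTaylorSymbol hc, ← RingHom.mapMatrix_apply, ← map_mul,
      nonsing_inv_mul M (hM.isUnit_det (normalizedTaylorSymbol_apply_self t c)), map_one]
  have hπ : π M⁻¹ = upperOnes n :=
    left_inv_eq_right_inv hinv one_sub_superdiagonalOnes_mul_upperOnes
  have hmem : M⁻¹ j k - 1 ∈ Ideal.span {t} := by
    rw [← Ideal.Quotient.eq, map_one]
    change π M⁻¹ j k = 1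
    rw [hπ, upperOnes_apply, if_pos hjk]
  obtain ⟨q, hq⟩ := Ideal.mem_span_singleton'.mp hmem
  exact ⟨q, by linear_combination -hq⟩

end TaylorSymbol

end Matrix

/-- Factorization of the inverse of the symbol of a generalized complete Taylor operator:
for `T̃*_d(z)` upper triangular with `z⁻¹ - 1` on the diagonal, `-1` on the superdiagonal
and constants above, we have `(T̃*_d(z))⁻¹ = (z⁻¹-1)⁻¹ D*(z) P*(z) D*(z)⁻¹` with
`D*(z) = diag(1, z⁻¹-1, …, (z⁻¹-1)^d)` and `P*(z)` upper triangular with Laurent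
polynomial entries, `p*_{jj} = 1`, and `p*_{jk}(1) = 1` for `j ≤ k` (expressed as
`P j k = 1 + (z⁻¹-1)·q`).  The inverse identity is stated without inverses as
`T̃*_d(z) · D*(z) · P*(z) = (z⁻¹-1) · D*(z)`. -/
theorem taylor_symbol_inverse (d : ℕ) (s : Fin (d + 1) → Fin (d + 1) → ℝ)
    (hsup : ∀ j k : Fin (d + 1), (k : ℕ) = (j : ℕ) + 1 → s j k = -1) :
    ∃ P : Matrix (Fin (d + 1)) (Fin (d + 1)) (LaurentPolynomial ℝ),
      (∀ j k : Fin (d + 1), k < j → P j k = 0) ∧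
      (∀ j : Fin (d + 1), P j j = 1) ∧
      (∀ j k : Fin (d + 1), j ≤ k → ∃ q : LaurentPolynomial ℝ, P j k = 1 + tsym * q) ∧
      (Matrix.of fun j k : Fin (d + 1) =>
          if j = k then tsym
          else if j < k then LaurentPolynomial.C (s j k) else 0)
        * Matrix.diagonal (fun j : Fin (d + 1) => tsym ^ (j : ℕ)) * P
        = tsym • Matrix.diagonal (fun j : Fin (d + 1) => tsym ^ (j : ℕ)) := by
  set c : Fin (d + 1) → Fin (d + 1) → LaurentPolynomial ℝ := fun j k => C (s j k)
  have hc : ∀ j k : Fin (d + 1), (k : ℕ) = j + 1 → c j k = -1 := fun j k h => by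
    simp [c, hsup j k h]
  have hM := Matrix.normalizedTaylorSymbol_isUpperTriangular tsym c
  have hdiag := Matrix.normalizedTaylorSymbol_apply_self tsym c
  refine ⟨(Matrix.normalizedTaylorSymbol tsym c)⁻¹, fun j k hkj => hM.nonsing_inv hkj,
    hM.nonsing_inv_apply_self hdiag,
    fun j k => Matrix.exists_nonsing_inv_normalizedTaylorSymbol_eq_one_add_mul hc, ?_⟩
  change Matrix.taylorSymbol tsym c * _ * _ = _
  rw [Matrix.taylorSymbol_mul_diagonal, Matrix.smul_mul, Matrix.mul_assoc,
    Matrix.mul_nonsing_inv _ (hM.isUnit_det hdiag), Matrix.mul_one]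
end

section
/- The (d(d+1)/2)×(d(d+1)/2) block matrix H with block rows [I_d, −H_{d,d−2}, …, −H_{d,0}], [C_{d−1}, −I_{d−1}, H_{d−1,d−3}, …, H_{d−1,0}], …, [C_1, −1, H_{1,0}] — where C_j is the j×(j+1)-type bidiagonal matrix with first column zero, 2's on the shifted diagonal and constants on the next superdiagonal, and each H_{j,k} ∈ ℝ^{j×(k+1)} has nonzero entries only in its top-left (k+1)×(k+1) diagonal part — satisfies |det H| = 1. In particular, det H is independent of the parameters w_{j,k} appearing in the blocks H_{j,k} and C_j. -/
/-- The block matrix `H` from the generic construction, with block rows/columns indexed by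
`b = 0, …, d-1` of sizes `d - b` (so total size `d(d+1)/2`):
* block `(0,0)` is the identity `I_d`;
* block `(0,c)`, `c ≥ 1`, is `-H_{d, d-1-c}`;
* block `(b,b)`, `b ≥ 1`, is `-I_{d-b}`;
* block `(b,b-1)`, `b ≥ 1`, is `C_{d-b}` (first column zero, `2`'s on the shifted
  diagonal, constant `d-b` at position `(0,2)`);
* block `(b,c)`, `1 ≤ b < c`, is `H_{d-b, d-1-c}`;
* all other blocks vanish.
Here `H_{j,k} ∈ ℝ^{j×(k+1)}` is `-w_{j,k+1}` times the matrix with diagonal entries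
`j!/(k+1)!, …, (j-k)!/1!` in the top `k+1` rows and zeros elsewhere. -/
noncomputable def Hmat (d : ℕ) (w : ℕ → ℕ → ℝ) :
    Matrix ((b : Fin d) × Fin (d - (b : ℕ))) ((b : Fin d) × Fin (d - (b : ℕ))) ℝ :=
  fun p q =>
    let b := (p.1 : ℕ); let i := (p.2 : ℕ)
    let c := (q.1 : ℕ); let i' := (q.2 : ℕ)
    if b = 0 then
      if c = 0 then (if i = i' then 1 else 0)
      else
        (if i = i' ∧ i ≤ d - 1 - c then
          w d (d - c) * ((Nat.factorial (d - i) : ℝ) / (Nat.factorial (d - c - i) : ℝ))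
        else 0)
    else if c = b then (if i = i' then -1 else 0)
    else if c + 1 = b then
      (if i' = i + 1 then 2 else if i = 0 ∧ i' = 2 then ((d - b : ℕ) : ℝ) else 0)
    else if b < c then
      (if i = i' ∧ i ≤ d - 1 - c then
        -(w (d - b) (d - c)) *
          ((Nat.factorial (d - b - i) : ℝ) / (Nat.factorial (d - c - i) : ℝ))
      else 0)
    else 0

/-!
Order the index pairs `(b, i)` (block `b`, position `i` within the block) first by the
anti-diagonal `b + i` and then by decreasing `b`. The `H`-blocks strictly increase `b + i`, while
the blocks `C_{d-b}` keep `b + i` (the entries `2`) or increase it (the entry `d - b`) and move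
to the block `b - 1`. So `H` is upper triangular for this order, with diagonal entries `±1`.
-/

theorem Matrix.det_eq_prod_diag_of_injective_key {n α R : Type*} [Fintype n] [DecidableEq n]
    [CommRing R] [LinearOrder α] (M : Matrix n n R) (key : n → α)
    (hkey : Function.Injective key) (hM : ∀ i j, key j < key i → M i j = 0) :
    M.det = ∏ i, M i i :=
  letI : LinearOrder n := LinearOrder.lift' key hkey
  det_of_isUpperTriangular hM

namespace Hmat

def key (d : ℕ) (p : (b : Fin d) × Fin (d - (b : ℕ))) : ℕ ×ₗ ℕᵒᵈ :=
  toLex ((p.1 : ℕ) + p.2, OrderDual.toDual (p.1 : ℕ))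

theorem key_injective (d : ℕ) : Function.Injective (key d) := by
  rintro ⟨b, i⟩ ⟨c, i'⟩ h
  simp only [key, toLex_inj, Prod.mk.injEq, OrderDual.toDual_inj] at h
  obtain rfl : b = c := Fin.ext h.2
  obtain rfl : i = i' := Fin.ext (by omega)
  rfl

theorem eq_zero_of_key_lt (d : ℕ) (w : ℕ → ℕ → ℝ) {p q : (b : Fin d) × Fin (d - (b : ℕ))}
    (hpq : key d q < key d p) : Hmat d w p q = 0 := by
  obtain ⟨⟨b, hb⟩, ⟨i, hi⟩⟩ := p
  obtain ⟨⟨c, hc⟩, ⟨i', hi'⟩⟩ := q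
  simp only [key, Prod.Lex.toLex_lt_toLex, OrderDual.toDual_lt_toDual] at hpq
  simp only [Hmat]
  split_ifs <;> first | rfl | omega

theorem diag_eq (d : ℕ) (w : ℕ → ℕ → ℝ) (p : (b : Fin d) × Fin (d - (b : ℕ))) :
    Hmat d w p p = if (p.1 : ℕ) = 0 then 1 else -1 := by
  simp only [Hmat]
  split_ifs <;> simp_all

end Hmat

/-- The determinant of `H` has absolute value `1`, independently of the parameters `w`. -/
theorem abs_det_Hmat (d : ℕ) (w : ℕ → ℕ → ℝ) : |(Hmat d w).det| = 1 := by
  rw [Matrix.det_eq_prod_diag_of_injective_key _ (Hmat.key d) (Hmat.key_injective d)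
    fun _ _ => Hmat.eq_zero_of_key_lt d w, Finset.abs_prod]
  refine Finset.prod_eq_one fun p _ => ?_
  rw [Hmat.diag_eq]
  split_ifs <;> simp
end
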